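/- Let p ≥ 1 and 1 ≤ ℓ < d be integers. Let {(V_j, v_j)}_{j=1}^n be a tight p-fusion frame in ℝ^ℓ with bound A_0, and let {(W_i, ω_i)}_{i=1}^m be a tight p-fusion frame in ℝ^d with bound A_1 in which every W_i has dimension ℓ. For each i, let f_i : ℝ^ℓ → ℝ^d be a linear isometry with range W_i, and set V_{i,j} := f_i(V_j) ⊆ W_i. Then the family {(V_{i,j}, ω_i v_j)}_{1≤i≤m, 1≤j≤n} is a tight p-fusion frame in ℝ^d with bound A_0·A_1, i.e. Σ_{i=1}^m Σ_{j=1}^n ω_i v_j ‖P_{V_{i,j}}(x)‖^{2p} = A_0 A_1 ‖x‖^{2p} for all x ∈ ℝ^d. -/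

import Mathlib

open scoped BigOperators

/-! Write the projection of `x` onto `W_i = range f_i` as `f_i y`. Since `f_i(V_j) ≤ W_i`, the
projection of `x` onto `f_i(V_j)` is that of `f_i y`, which is `f_i (P_{V_j} y)`; so the inner sum
over `j` is the frame identity in `ℝ^ℓ` at `y`, namely `A₀ ‖y‖^{2p} = A₀ ‖P_{W_i} x‖^{2p}`, and the
outer sum is then `A₀ A₁ ‖x‖^{2p}` by the frame identity in `ℝ^d`. -/

/-- The orthogonal projection onto a subspace `V` of `ℝ^d`, as a linear endomorphism. -/
noncomputable def proj {d : ℕ} (V : Submodule ℝ (EuclideanSpace ℝ (Fin d))) :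
    EuclideanSpace ℝ (Fin d) →ₗ[ℝ] EuclideanSpace ℝ (Fin d) :=
  V.subtype ∘ₗ (Submodule.orthogonalProjectionOnto V).toLinearMap

theorem proj_apply {d : ℕ} (V : Submodule ℝ (EuclideanSpace ℝ (Fin d)))
    (x : EuclideanSpace ℝ (Fin d)) : proj V x = V.starProjection x :=
  rfl

namespace LinearIsometry

variable {𝕜 E F : Type*} [RCLike 𝕜] [NormedAddCommGroup E] [InnerProductSpace 𝕜 E]
  [NormedAddCommGroup F] [InnerProductSpace 𝕜 F] (f : E →ₗᵢ[𝕜] F)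
  [(LinearMap.range f.toLinearMap).HasOrthogonalProjection]

theorem norm_starProjection_map (K : Submodule 𝕜 E) [K.HasOrthogonalProjection]
    [(K.map f.toLinearMap).HasOrthogonalProjection] {x : F} {y : E}
    (hy : f y = (LinearMap.range f.toLinearMap).starProjection x) :
    ‖(K.map f.toLinearMap).starProjection x‖ = ‖K.starProjection y‖ := by
  have hle : K.map f.toLinearMap ≤ LinearMap.range f.toLinearMap := LinearMap.map_le_range
  have hx : (K.map f.toLinearMap).starProjection x
      = (K.map f.toLinearMap).starProjection (f y) := by
    rw [hy, Submodule.starProjection_apply, Submodule.starProjection_apply,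
      Submodule.orthogonalProjectionOnto_starProjection_of_le hle]
  rw [hx, ← f.map_starProjection, f.norm_map]

theorem sum_mul_norm_starProjection_map_pow {ι : Type*} [Fintype ι] (V : ι → Submodule 𝕜 E)
    [∀ j, (V j).HasOrthogonalProjection] [∀ j, ((V j).map f.toLinearMap).HasOrthogonalProjection]
    (v : ι → ℝ) (q : ℕ) (A : ℝ)
    (hV : ∀ y, ∑ j, v j * ‖(V j).starProjection y‖ ^ q = A * ‖y‖ ^ q) (x : F) :
    ∑ j, v j * ‖((V j).map f.toLinearMap).starProjection x‖ ^ q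
      = A * ‖(LinearMap.range f.toLinearMap).starProjection x‖ ^ q := by
  obtain ⟨y, hy⟩ : (LinearMap.range f.toLinearMap).starProjection x
      ∈ LinearMap.range f.toLinearMap :=
    Submodule.starProjection_apply_mem _ x
  simp_rw [f.norm_starProjection_map _ hy, hV y, ← hy]
  rw [coe_toLinearMap, f.norm_map]

end LinearIsometry

theorem stmt18_general {l d : ℕ} (p : ℕ)
    {n m : ℕ}
    (V : Fin n → Submodule ℝ (EuclideanSpace ℝ (Fin l)))
    (v : Fin n → ℝ)
    (W : Fin m → Submodule ℝ (EuclideanSpace ℝ (Fin d)))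
    (ω : Fin m → ℝ)
    (A₀ : ℝ)
    (h₀ : ∀ y : EuclideanSpace ℝ (Fin l),
      ∑ j, v j * ‖proj (V j) y‖ ^ (2 * p) = A₀ * ‖y‖ ^ (2 * p))
    (A₁ : ℝ)
    (h₁ : ∀ x : EuclideanSpace ℝ (Fin d),
      ∑ i, ω i * ‖proj (W i) x‖ ^ (2 * p) = A₁ * ‖x‖ ^ (2 * p))
    (f : Fin m → (EuclideanSpace ℝ (Fin l) →ₗᵢ[ℝ] EuclideanSpace ℝ (Fin d)))
    (hf : ∀ i, LinearMap.range (f i).toLinearMap = W i) :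
    ∀ x : EuclideanSpace ℝ (Fin d),
      ∑ i, ∑ j, ω i * v j * ‖proj ((V j).map (f i).toLinearMap) x‖ ^ (2 * p)
        = A₀ * A₁ * ‖x‖ ^ (2 * p) := by
  intro x
  obtain rfl : W = fun i ↦ LinearMap.range (f i).toLinearMap := funext fun i ↦ (hf i).symm
  simp only [proj_apply] at h₀ h₁ ⊢
  calc ∑ i, ∑ j, ω i * v j * ‖((V j).map (f i).toLinearMap).starProjection x‖ ^ (2 * p)
      = ∑ i, ω i * (A₀ * ‖(LinearMap.range (f i).toLinearMap).starProjection x‖ ^ (2 * p)) := by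
        simp_rw [mul_assoc, ← Finset.mul_sum, (f _).sum_mul_norm_starProjection_map_pow V v _ A₀ h₀]
    _ = A₀ * A₁ * ‖x‖ ^ (2 * p) := by
        rw [mul_assoc, ← h₁ x, Finset.mul_sum]
        exact Finset.sum_congr rfl fun i _ ↦ by ring

theorem stmt18 {l d : ℕ} (p : ℕ) (hp : 1 ≤ p) (hl : 1 ≤ l) (hld : l < d)
    {n m : ℕ}
    (V : Fin n → Submodule ℝ (EuclideanSpace ℝ (Fin l)))
    (hVbot : ∀ j, V j ≠ ⊥) (hVtop : ∀ j, V j ≠ ⊤)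
    (v : Fin n → ℝ) (hv : ∀ j, 0 < v j)
    (W : Fin m → Submodule ℝ (EuclideanSpace ℝ (Fin d)))
    (hWdim : ∀ i, Module.finrank ℝ (W i) = l)
    (ω : Fin m → ℝ) (hω : ∀ i, 0 < ω i)
    (A₀ : ℝ) (hA₀ : 0 < A₀)
    (h₀ : ∀ y : EuclideanSpace ℝ (Fin l),
      ∑ j, v j * ‖proj (V j) y‖ ^ (2 * p) = A₀ * ‖y‖ ^ (2 * p))
    (A₁ : ℝ) (hA₁ : 0 < A₁)
    (h₁ : ∀ x : EuclideanSpace ℝ (Fin d),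
      ∑ i, ω i * ‖proj (W i) x‖ ^ (2 * p) = A₁ * ‖x‖ ^ (2 * p))
    (f : Fin m → (EuclideanSpace ℝ (Fin l) →ₗᵢ[ℝ] EuclideanSpace ℝ (Fin d)))
    (hf : ∀ i, LinearMap.range (f i).toLinearMap = W i) :
    ∀ x : EuclideanSpace ℝ (Fin d),
      ∑ i, ∑ j, ω i * v j * ‖proj ((V j).map (f i).toLinearMap) x‖ ^ (2 * p)
        = A₀ * A₁ * ‖x‖ ^ (2 * p) :=
  stmt18_general p V v W ω A₀ h₀ A₁ h₁ f hf
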